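/- Let α be a real number with −1 ≤ α < 1, and let κ_α be any real number satisfying κ_α > 1, and additionally κ_α ≤ 2/(1 + α) if α > −1. Let V = {p_1, p_2, p_3, p_4, p_5} and let f : 2^V → ℝ be the cut capacity function of the path graph on V with edges {p_1, p_2}, {p_2, p_3}, {p_3, p_4}, {p_4, p_5} and capacities c(p_1, p_2) = c(p_2, p_3) = c(p_4, p_5) = 1 and c(p_3, p_4) = κ_α. Then (p_1, p_2, p_3, p_4, p_5) is an α-ordering of V with respect to f, and (p_4, p_5) is not a flat pair with respect to f. -/
import Mathlib


open Finset

def prefSet {V : Type*} [DecidableEq V] {n : ℕ} (v : Fin n → V) (i : Fin n) : Finset V :=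
  (Finset.univ.filter (fun k : Fin n => k < i)).image v

def IsAlphaOrdering {V : Type*} [DecidableEq V] {n : ℕ} (α : ℝ)
    (f : Finset V → ℝ) (v : Fin n → V) : Prop :=
  ∀ i j : Fin n, i ≤ j →
    f (insert (v i) (prefSet v i)) + α * f {v i} ≤
      f (insert (v j) (prefSet v i)) + α * f {v j}

def FlatPair {V : Type*} [DecidableEq V] [Fintype V]
    (f : Finset V → ℝ) (u w : V) : Prop :=
  ∀ X : Finset V, X ⊂ Finset.univ → (X ∩ ({u, w} : Finset V)).card = 1 →
    ∀ hX : X.Nonempty, X.inf' hX (fun x => f {x}) ≤ f X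

def cutFun {V : Type*} [DecidableEq V] [Fintype V] (c : V → V → ℝ) (X : Finset V) : ℝ :=
  ∑ u ∈ X, ∑ w ∈ Xᶜ, c u w

/-- Capacities of the path graph on `{p₁, …, p₅}` (here `pᵢ = i - 1 : Fin 5`) with
edges `{p₁, p₂}, {p₂, p₃}, {p₄, p₅}` of capacity `1` and `{p₃, p₄}` of capacity `k`. -/
def cap18 (k : ℝ) : Fin 5 → Fin 5 → ℝ := fun u w =>
  if (u = 0 ∧ w = 1) ∨ (u = 1 ∧ w = 0) then 1
  else if (u = 1 ∧ w = 2) ∨ (u = 2 ∧ w = 1) then 1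
  else if (u = 3 ∧ w = 4) ∨ (u = 4 ∧ w = 3) then 1
  else if (u = 2 ∧ w = 3) ∨ (u = 3 ∧ w = 2) then k
  else 0

lemma cutFun_eq (c : Fin 5 → Fin 5 → ℝ) (X : Finset (Fin 5)) :
    cutFun c X = ∑ u : Fin 5, ∑ w : Fin 5,
      (if u ∈ X ∧ w ∉ X then c u w else 0) := by
  unfold cutFun
  symm
  calc ∑ u : Fin 5, ∑ w : Fin 5, (if u ∈ X ∧ w ∉ X then c u w else 0)
      = ∑ u : Fin 5, (if u ∈ X then ∑ w : Fin 5, (if w ∈ Xᶜ then c u w else 0) else 0) := by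
        refine Finset.sum_congr rfl fun u _ => ?_
        by_cases hu : u ∈ X <;> simp [hu]
    _ = ∑ u ∈ X, ∑ w : Fin 5, (if w ∈ Xᶜ then c u w else 0) := by
        rw [Finset.sum_ite_mem, Finset.univ_inter]
    _ = ∑ u ∈ X, ∑ w ∈ Xᶜ, c u w := by
        refine Finset.sum_congr rfl fun u _ => ?_
        rw [Finset.sum_ite_mem, Finset.univ_inter]

/-- Proposition 6.3, case `-1 ≤ α < 1`: for any `κ_α > 1` with additionally
`κ_α ≤ 2 / (1 + α)` when `α > -1`, the ordering `(p₁, p₂, p₃, p₄, p₅)` is an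
`α`-ordering of the cut function of the path, but `(p₄, p₅)` is not a flat pair. -/
theorem stmt_18 (α : ℝ) (hα₁ : -1 ≤ α) (hα₂ : α < 1)
    (k : ℝ) (hk₁ : 1 < k) (hk₂ : -1 < α → k ≤ 2 / (1 + α)) :
    IsAlphaOrdering α (cutFun (cap18 k)) (id : Fin 5 → Fin 5) ∧
      ¬ FlatPair (cutFun (cap18 k)) 3 4 := by
  have hkey : k * (1 + α) ≤ 2 := by
    rcases eq_or_lt_of_le hα₁ with h | h
    · rw [← h]; norm_num
    · have hd := hk₂ h
      rw [le_div_iff₀ (by linarith)] at hd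
      linarith
  constructor
  · intro i j hij
    fin_cases i <;> fin_cases j <;>
      first
      | exact absurd hij (by decide)
      | (simp (config := { decide := true }) [cutFun_eq, Fin.sum_univ_five, prefSet, cap18]
         <;> nlinarith [hk₁, hkey, hα₁, hα₂])
  · intro h
    have := h {2, 3} (by decide) (by decide) ⟨2, by decide⟩
    rw [show ({2, 3} : Finset (Fin 5)).inf' ⟨2, by decide⟩ (fun x => cutFun (cap18 k) {x})
        = min (cutFun (cap18 k) {2}) (cutFun (cap18 k) {3}) from by
      simp [Finset.inf'_insert, min_def]] at this
    simp (config := { decide := true }) [cutFun_eq, Fin.sum_univ_five, cap18, min_def] at this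
    split_ifs at this <;> linarith
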